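/- arXiv:2508.10084 — 5 statements merged into one kernel-verified Lean document; each statement's English description precedes it below -/
import Mathlib

section
/- Let R be a von Neumann algebra on a Hilbert space H and Γ a self-adjoint unitary on H with Γ R Γ = R. Then the set L = R^(0) + R^(1)Γ (where R^(σ) = {x ∈ R : ΓxΓ = (-1)^σ x}) is a von Neumann algebra on H, it is invariant under Ad_Γ, and its even and odd parts with respect to Ad_Γ are L^(0) = R^(0) and L^(1) = R^(1)Γ. -/
set_option linter.unusedSectionVars false
set_option maxHeartbeats 1000000


noncomputable section

variable {H : Type*} [NormedAddCommGroup H] [InnerProductSpace ℂ H] [CompleteSpace H]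

/-- A self-adjoint unitary operator. -/
def IsSAU (Γ : H →L[ℂ] H) : Prop := star Γ = Γ ∧ Γ * Γ = 1

/-- The even part of a graded set of operators. -/
def evenPart (R : Set (H →L[ℂ] H)) (Γ : H →L[ℂ] H) : Set (H →L[ℂ] H) :=
  {x | x ∈ R ∧ Γ * x * Γ = x}

/-- The odd part of a graded set of operators. -/
def oddPart (R : Set (H →L[ℂ] H)) (Γ : H →L[ℂ] H) : Set (H →L[ℂ] H) :=
  {x | x ∈ R ∧ Γ * x * Γ = -x}

/-- The center of a set of operators. -/
def centerSet (R : Set (H →L[ℂ] H)) : Set (H →L[ℂ] H) :=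
  {x | x ∈ R ∧ ∀ y ∈ R, x * y = y * x}

/-- An (orthogonal) projection operator. -/
def IsProjOp (e : H →L[ℂ] H) : Prop := e * e = e ∧ star e = e

/-- `e` is a subprojection of `f`. -/
def SubProj (e f : H →L[ℂ] H) : Prop := e * f = e ∧ f * e = e

/-- Murray–von Neumann equivalence of projections relative to `M`. -/
def MvNEquiv (M : Set (H →L[ℂ] H)) (e f : H →L[ℂ] H) : Prop :=
  ∃ v ∈ M, star v * v = e ∧ v * star v = f

/-- `e` is finite relative to `M`. -/
def FiniteProj (M : Set (H →L[ℂ] H)) (e : H →L[ℂ] H) : Prop :=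
  ∀ f ∈ M, IsProjOp f → SubProj f e → MvNEquiv M f e → f = e

/-- `e` is an abelian projection relative to `M`: the corner `eMe` is commutative. -/
def AbelianProj (M : Set (H →L[ℂ] H)) (e : H →L[ℂ] H) : Prop :=
  ∀ x ∈ M, ∀ y ∈ M, (e * x * e) * (e * y * e) = (e * y * e) * (e * x * e)

/-- A von Neumann algebra (given as a set) is of type III: no nonzero finite projections. -/
def TypeIII (M : Set (H →L[ℂ] H)) : Prop :=
  ∀ e ∈ M, IsProjOp e → FiniteProj M e → e = 0

/-- Type II₁ : finite with no nonzero abelian projections. -/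
def TypeII1 (M : Set (H →L[ℂ] H)) : Prop :=
  FiniteProj M 1 ∧ ∀ e ∈ M, IsProjOp e → AbelianProj M e → e = 0

/-- Type I_n : the identity is the sum of `n` orthogonal, mutually equivalent
abelian projections. -/
def TypeI (M : Set (H →L[ℂ] H)) (n : Cardinal) : Prop :=
  ∃ (ι : Type) (E : ι → H →L[ℂ] H), Cardinal.mk ι = n ∧
    (∀ a, E a ∈ M ∧ IsProjOp (E a) ∧ AbelianProj M (E a)) ∧
    (Pairwise fun a b => E a * E b = 0) ∧
    (∀ a b, MvNEquiv M (E a) (E b)) ∧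
    (∀ v : H, HasSum (fun a => (E a) v) v)

/-- The scalar operators. -/
def scalarOps (H : Type*) [NormedAddCommGroup H] [InnerProductSpace ℂ H] [CompleteSpace H] :
    Set (H →L[ℂ] H) := Set.range fun c : ℂ => c • (1 : H →L[ℂ] H)

/-- `M` is a factor. -/
def IsFactor (M : Set (H →L[ℂ] H)) : Prop := centerSet M = scalarOps H

/-- `R` is graded by the self-adjoint unitary `Γ`. -/
def GradedBy (R : Set (H →L[ℂ] H)) (Γ : H →L[ℂ] H) : Prop :=
  IsSAU Γ ∧ ∀ x ∈ R, Γ * x * Γ ∈ R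

/-- The von Neumann algebra generated by a (star-closed, unital) set:
its double commutant. -/
def genVN (S : Set (H →L[ℂ] H)) : Set (H →L[ℂ] H) :=
  Set.centralizer (Set.centralizer S)

/-- `c` is the central support of `T` in `M`. -/
def IsCentralSupport (M : Set (H →L[ℂ] H)) (T c : H →L[ℂ] H) : Prop :=
  c ∈ centerSet M ∧ IsProjOp c ∧ c * T = T ∧
    ∀ d ∈ centerSet M, IsProjOp d → d * T = T → c * d = c

private lemma aux_key (h2 : Γ * Γ = 1) (x : H →L[ℂ] H) :
    Γ * x * Γ = x ↔ Γ * x = x * Γ := by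
  constructor
  · intro h
    conv_rhs => rw [← h]
    rw [mul_assoc (Γ * x), h2, mul_one]
  · intro h
    rw [h, mul_assoc, h2, mul_one]

private lemma aux_keyodd (h2 : Γ * Γ = 1) (y : H →L[ℂ] H) :
    Γ * y * Γ = -y ↔ Γ * y = -(y * Γ) := by
  constructor
  · intro h
    have h' : Γ * y * Γ * Γ = -y * Γ := by rw [h]
    rwa [mul_assoc (Γ * y), h2, mul_one, neg_mul] at h'
  · intro h
    rw [h, neg_mul, mul_assoc, h2, mul_one]

private lemma aux_AdMul (h2 : Γ * Γ = 1) (a b : H →L[ℂ] H) :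
    Γ * (a * b) * Γ = (Γ * a * Γ) * (Γ * b * Γ) := by
  have : (Γ * a * Γ) * (Γ * b * Γ) = Γ * a * (Γ * Γ) * b * Γ := by
    simp only [mul_assoc]
  rw [this, h2, mul_one, mul_assoc Γ a b]

private lemma aux_AdAd (h2 : Γ * Γ = 1) (a : H →L[ℂ] H) :
    Γ * (Γ * a * Γ) * Γ = a := by
  have : Γ * (Γ * a * Γ) * Γ = (Γ * Γ) * a * (Γ * Γ) := by
    simp only [mul_assoc]
  rw [this, h2, one_mul, mul_one]

private lemma aux_AdAdd (a b : H →L[ℂ] H) :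
    Γ * (a + b) * Γ = Γ * a * Γ + Γ * b * Γ := by
  rw [mul_add, add_mul]

private lemma aux_AdSub (a b : H →L[ℂ] H) :
    Γ * (a - b) * Γ = Γ * a * Γ - Γ * b * Γ := by
  rw [mul_sub, sub_mul]

private lemma aux_AdSmul (c : ℂ) (a : H →L[ℂ] H) :
    Γ * (c • a) * Γ = c • (Γ * a * Γ) := by
  rw [mul_smul_comm, smul_mul_assoc]

private lemma aux_swap (h2 : Γ * Γ = 1) {T : Set (H →L[ℂ] H)}
    (hT : ∀ m ∈ T, Γ * m * Γ ∈ T) {c : H →L[ℂ] H}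
    (hc : ∀ m ∈ T, m * c = c * m) : ∀ m ∈ T, m * (Γ * c * Γ) = (Γ * c * Γ) * m := by
  intro m hm
  have h1 := hc _ (hT m hm)
  calc m * (Γ * c * Γ) = (Γ * (Γ * m * Γ) * Γ) * (Γ * c * Γ) := by rw [aux_AdAd h2]
    _ = Γ * ((Γ * m * Γ) * c) * Γ := (aux_AdMul h2 _ _).symm
    _ = Γ * (c * (Γ * m * Γ)) * Γ := by rw [h1]
    _ = (Γ * c * Γ) * (Γ * (Γ * m * Γ) * Γ) := aux_AdMul h2 _ _
    _ = (Γ * c * Γ) * m := by rw [aux_AdAd h2]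

/-- `L = R⁰ + R¹Γ` is a von Neumann algebra, graded by `Γ`, with
even part `R⁰` and odd part `R¹Γ`. -/
theorem stmt_0 (R : VonNeumannAlgebra H) (Γ : H →L[ℂ] H) (hΓ : IsSAU Γ)
    (hinv : ∀ x ∈ R, Γ * x * Γ ∈ R) :
    ∃ L : VonNeumannAlgebra H,
      (L : Set (H →L[ℂ] H)) =
        {z | ∃ x ∈ evenPart (R : Set (H →L[ℂ] H)) Γ,
             ∃ y ∈ oddPart (R : Set (H →L[ℂ] H)) Γ, z = x + y * Γ} ∧
      GradedBy (L : Set (H →L[ℂ] H)) Γ ∧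
      evenPart (L : Set (H →L[ℂ] H)) Γ = evenPart (R : Set (H →L[ℂ] H)) Γ ∧
      oddPart (L : Set (H →L[ℂ] H)) Γ =
        (fun y => y * Γ) '' oddPart (R : Set (H →L[ℂ] H)) Γ := by
  obtain ⟨hsa, h2⟩ := hΓ
  have hcan : ∀ a : H →L[ℂ] H, a * Γ * Γ = a := fun a => by rw [mul_assoc, h2, mul_one]
  set A : Set (H →L[ℂ] H) := (R : Set (H →L[ℂ] H)) with hAdef
  set E := evenPart A Γ with hEdef
  set O := oddPart A Γ with hOdef
  set S : Set (H →L[ℂ] H) := {z | ∃ x ∈ E, ∃ y ∈ O, z = x + y * Γ} with hSdef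
  -- basic membership facts
  have hzeroE : (0 : H →L[ℂ] H) ∈ E := ⟨zero_mem R, by simp⟩
  have hzeroO : (0 : H →L[ℂ] H) ∈ O := ⟨zero_mem R, by simp⟩
  have hEmemS : ∀ {x : H →L[ℂ] H}, x ∈ E → x ∈ S := fun {x} hx => ⟨x, hx, 0, hzeroO, by simp⟩
  have hOmemS : ∀ {y : H →L[ℂ] H}, y ∈ O → y * Γ ∈ S := fun {y} hy =>
    ⟨0, hzeroE, y, hy, by simp⟩
  have hEcomm : ∀ {x : H →L[ℂ] H}, x ∈ E → Γ * x = x * Γ := fun hx => (aux_key h2 _).mp hx.2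
  have hOcomm : ∀ {y : H →L[ℂ] H}, y ∈ O → Γ * y = -(y * Γ) := fun hy =>
    (aux_keyodd h2 _).mp hy.2
  -- closure properties of the even and odd parts
  have hEadd : ∀ {a b : H →L[ℂ] H}, a ∈ E → b ∈ E → a + b ∈ E := fun ha hb =>
    ⟨add_mem ha.1 hb.1, by rw [aux_AdAdd, ha.2, hb.2]⟩
  have hOadd : ∀ {a b : H →L[ℂ] H}, a ∈ O → b ∈ O → a + b ∈ O := fun ha hb =>
    ⟨add_mem ha.1 hb.1, by rw [aux_AdAdd, ha.2, hb.2, neg_add]⟩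
  have hEsub : ∀ {a b : H →L[ℂ] H}, a ∈ E → b ∈ E → a - b ∈ E := fun ha hb =>
    ⟨sub_mem ha.1 hb.1, by rw [aux_AdSub, ha.2, hb.2]⟩
  have hOneg : ∀ {a : H →L[ℂ] H}, a ∈ O → -a ∈ O := fun {a} ha =>
    ⟨neg_mem ha.1, by
      have : Γ * (-a) * Γ = -(Γ * a * Γ) := by rw [mul_neg, neg_mul]
      rw [this, ha.2, neg_neg]⟩
  have hEE : ∀ {a b : H →L[ℂ] H}, a ∈ E → b ∈ E → a * b ∈ E := fun ha hb =>
    ⟨mul_mem ha.1 hb.1, by rw [aux_AdMul h2, ha.2, hb.2]⟩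
  have hOO : ∀ {a b : H →L[ℂ] H}, a ∈ O → b ∈ O → a * b ∈ E := fun ha hb =>
    ⟨mul_mem ha.1 hb.1, by rw [aux_AdMul h2, ha.2, hb.2, neg_mul_neg]⟩
  have hEO : ∀ {a b : H →L[ℂ] H}, a ∈ E → b ∈ O → a * b ∈ O := fun ha hb =>
    ⟨mul_mem ha.1 hb.1, by rw [aux_AdMul h2, ha.2, hb.2, mul_neg]⟩
  have hOE : ∀ {a b : H →L[ℂ] H}, a ∈ O → b ∈ E → a * b ∈ O := fun ha hb =>
    ⟨mul_mem ha.1 hb.1, by rw [aux_AdMul h2, ha.2, hb.2, neg_mul]⟩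
  have hEstar : ∀ {a : H →L[ℂ] H}, a ∈ E → star a ∈ E := fun {a} ha =>
    ⟨star_mem ha.1, by
      have := congrArg star ha.2
      simp only [star_mul, hsa] at this
      rw [mul_assoc]
      exact this⟩
  have hOstar : ∀ {a : H →L[ℂ] H}, a ∈ O → star a ∈ O := fun {a} ha =>
    ⟨star_mem ha.1, by
      have := congrArg star ha.2
      simp only [star_mul, hsa, star_neg] at this
      rw [mul_assoc]
      exact this⟩
  have hAdΓ : Γ * Γ * Γ = Γ := by rw [h2, one_mul]
  -- S is invariant under Ad Γ
  have hSad : ∀ m ∈ S, Γ * m * Γ ∈ S := by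
    rintro m ⟨x, hx, y, hy, rfl⟩
    refine ⟨x, hx, -y, hOneg hy, ?_⟩
    rw [aux_AdAdd, hx.2, aux_AdMul h2 y Γ, hy.2, hAdΓ, neg_mul]
  -- centralizer closure facts
  have hCadd : ∀ {a b : H →L[ℂ] H}, a ∈ Set.centralizer A → b ∈ Set.centralizer A →
      a + b ∈ Set.centralizer A := fun ha hb m hm => by
    rw [mul_add, add_mul, ha m hm, hb m hm]
  have hCsub : ∀ {a b : H →L[ℂ] H}, a ∈ Set.centralizer A → b ∈ Set.centralizer A →
      a - b ∈ Set.centralizer A := fun ha hb m hm => by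
    rw [mul_sub, sub_mul, ha m hm, hb m hm]
  have hCsmul : ∀ (c : ℂ) {a : H →L[ℂ] H}, a ∈ Set.centralizer A →
      c • a ∈ Set.centralizer A := by
    intro c a ha m hm
    rw [mul_smul_comm, smul_mul_assoc, ha m hm]
  have hAinv : ∀ m ∈ A, Γ * m * Γ ∈ A := fun m hm => hinv m hm
  have hAdC : ∀ {c : H →L[ℂ] H}, c ∈ Set.centralizer A → Γ * c * Γ ∈ Set.centralizer A :=
    fun hc => aux_swap h2 hAinv hc
  have hCSad : ∀ c ∈ Set.centralizer S, Γ * c * Γ ∈ Set.centralizer S :=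
    fun _ hc => aux_swap h2 hSad hc
  -- key membership results into the centralizer of S
  have hc0S : ∀ {c : H →L[ℂ] H}, c ∈ Set.centralizer A → Γ * c = c * Γ →
      c ∈ Set.centralizer S := by
    intro c hc hcomm
    rintro m ⟨x, hx, y, hy, rfl⟩
    have h1 : x * c = c * x := hc _ hx.1
    have h2y : y * c = c * y := hc _ hy.1
    have h3 : (y * Γ) * c = c * (y * Γ) := by
      rw [mul_assoc, hcomm, ← mul_assoc, h2y, mul_assoc]
    rw [add_mul, mul_add, h1, h3]
  have hc1S : ∀ {c : H →L[ℂ] H}, c ∈ Set.centralizer A → Γ * c = -(c * Γ) →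
      c * Γ ∈ Set.centralizer S := by
    intro c hc hcomm
    rintro m ⟨x, hx, y, hy, rfl⟩
    have hx2 := hEcomm hx
    have hy2 := hOcomm hy
    have hxc : x * c = c * x := hc _ hx.1
    have hyc : y * c = c * y := hc _ hy.1
    have L1 : x * (c * Γ) = c * x * Γ := by rw [← mul_assoc, hxc]
    have L2 : (y * Γ) * (c * Γ) = -(c * y) := by
      calc (y * Γ) * (c * Γ) = y * (Γ * c) * Γ := by simp only [mul_assoc]
        _ = y * (-(c * Γ)) * Γ := by rw [hcomm]
        _ = -(y * c) := by simp only [mul_neg, neg_mul, mul_assoc, h2, mul_one]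
        _ = -(c * y) := by rw [hyc]
    have R1 : (c * Γ) * x = c * x * Γ := by rw [mul_assoc, hx2, ← mul_assoc]
    have R2 : (c * Γ) * (y * Γ) = -(c * y) := by
      calc (c * Γ) * (y * Γ) = c * (Γ * y) * Γ := by simp only [mul_assoc]
        _ = c * (-(y * Γ)) * Γ := by rw [hy2]
        _ = -(c * y) := by simp only [mul_neg, neg_mul, mul_assoc, h2, mul_one]
    rw [add_mul, mul_add, L1, L2, R1, R2]
  -- the averaging identities
  have key0 : ∀ u : H →L[ℂ] H,
      Γ * ((2:ℂ)⁻¹ • (u + Γ * u * Γ)) * Γ = (2:ℂ)⁻¹ • (u + Γ * u * Γ) := by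
    intro u
    rw [aux_AdSmul, aux_AdAdd, aux_AdAd h2, add_comm]
  have key1 : ∀ u : H →L[ℂ] H,
      Γ * ((2:ℂ)⁻¹ • (u - Γ * u * Γ)) * Γ = -((2:ℂ)⁻¹ • (u - Γ * u * Γ)) := by
    intro u
    rw [aux_AdSmul, aux_AdSub, aux_AdAd h2, ← smul_neg, neg_sub]
  -- the hard inclusion : the double centralizer of S is contained in S
  have hmain : Set.centralizer (Set.centralizer S) ⊆ S := by
    intro z hz
    have hz' : ∀ c ∈ Set.centralizer S, c * (Γ * z * Γ) = (Γ * z * Γ) * c :=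
      aux_swap h2 hCSad hz
    set w : H →L[ℂ] H := Γ * z * Γ with hwdef
    set z0 : H →L[ℂ] H := (2:ℂ)⁻¹ • (z + w) with hz0def
    set z1 : H →L[ℂ] H := (2:ℂ)⁻¹ • (z - w) with hz1def
    have hz0Γ : Γ * z0 = z0 * Γ := (aux_key h2 _).mp (key0 z)
    have hz1Γ : Γ * z1 = -(z1 * Γ) := (aux_keyodd h2 _).mp (key1 z)
    -- z0 belongs to the double centralizer of A, hence to A
    have hz0A : z0 ∈ A := by
      rw [hAdef, ← R.centralizer_centralizer]
      intro c hc
      set c0 : H →L[ℂ] H := (2:ℂ)⁻¹ • (c + Γ * c * Γ) with hc0def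
      set c1 : H →L[ℂ] H := (2:ℂ)⁻¹ • (c - Γ * c * Γ) with hc1def
      have hc0C : c0 ∈ Set.centralizer A := hCsmul _ (hCadd hc (hAdC hc))
      have hc1C : c1 ∈ Set.centralizer A := hCsmul _ (hCsub hc (hAdC hc))
      have hc0comm : Γ * c0 = c0 * Γ := (aux_key h2 _).mp (key0 c)
      have hc1comm : Γ * c1 = -(c1 * Γ) := (aux_keyodd h2 _).mp (key1 c)
      have hc0s : c0 ∈ Set.centralizer S := hc0S hc0C hc0comm
      have hc1s : c1 * Γ ∈ Set.centralizer S := hc1S hc1C hc1comm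
      have hc0z : c0 * z = z * c0 := hz _ hc0s
      have hc0w : c0 * w = w * c0 := hz' _ hc0s
      have hc1z : (c1 * Γ) * z = z * (c1 * Γ) := hz _ hc1s
      have hc1w : (c1 * Γ) * w = w * (c1 * Γ) := hz' _ hc1s
      have hz0c0 : c0 * z0 = z0 * c0 := by
        rw [hz0def]
        simp only [mul_smul_comm, smul_mul_assoc, mul_add, add_mul, hc0z, hc0w]
      have e : (c1 * Γ) * z0 = z0 * (c1 * Γ) := by
        rw [hz0def]
        simp only [mul_smul_comm, smul_mul_assoc, mul_add, add_mul, hc1z, hc1w]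
      have hc1z0 : c1 * z0 = z0 * c1 := by
        have e' : c1 * (z0 * Γ) = z0 * (c1 * Γ) := by
          rw [← hz0Γ, ← mul_assoc]; exact e
        have e'' : c1 * z0 * Γ = z0 * c1 * Γ := by
          rw [mul_assoc, e', ← mul_assoc]
        have e3 := congrArg (fun t => t * Γ) e''
        simpa only [hcan] using e3
      have hcsplit : c = c0 + c1 := by
        rw [hc0def, hc1def]
        module
      rw [hcsplit, add_mul, hz0c0, hc1z0, mul_add]
    -- z1 * Γ belongs to A
    have hyA : z1 * Γ ∈ A := by
      rw [hAdef, ← R.centralizer_centralizer]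
      intro c hc
      set c0 : H →L[ℂ] H := (2:ℂ)⁻¹ • (c + Γ * c * Γ) with hc0def
      set c1 : H →L[ℂ] H := (2:ℂ)⁻¹ • (c - Γ * c * Γ) with hc1def
      have hc0C : c0 ∈ Set.centralizer A := hCsmul _ (hCadd hc (hAdC hc))
      have hc1C : c1 ∈ Set.centralizer A := hCsmul _ (hCsub hc (hAdC hc))
      have hc0comm : Γ * c0 = c0 * Γ := (aux_key h2 _).mp (key0 c)
      have hc1comm : Γ * c1 = -(c1 * Γ) := (aux_keyodd h2 _).mp (key1 c)
      have hc0s : c0 ∈ Set.centralizer S := hc0S hc0C hc0comm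
      have hc1s : c1 * Γ ∈ Set.centralizer S := hc1S hc1C hc1comm
      have hc0z : c0 * z = z * c0 := hz _ hc0s
      have hc0w : c0 * w = w * c0 := hz' _ hc0s
      have hc1z : (c1 * Γ) * z = z * (c1 * Γ) := hz _ hc1s
      have hc1w : (c1 * Γ) * w = w * (c1 * Γ) := hz' _ hc1s
      have hz1c0 : c0 * z1 = z1 * c0 := by
        rw [hz1def]
        simp only [mul_smul_comm, smul_mul_assoc, mul_sub, sub_mul, hc0z, hc0w]
      have e1 : (c1 * Γ) * z1 = z1 * (c1 * Γ) := by
        rw [hz1def]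
        simp only [mul_smul_comm, smul_mul_assoc, mul_sub, sub_mul, hc1z, hc1w]
      -- commutation of z1 * Γ with c0
      have hyc0 : c0 * (z1 * Γ) = (z1 * Γ) * c0 := by
        calc c0 * (z1 * Γ) = (c0 * z1) * Γ := by rw [mul_assoc]
          _ = (z1 * c0) * Γ := by rw [hz1c0]
          _ = z1 * (c0 * Γ) := by rw [mul_assoc]
          _ = z1 * (Γ * c0) := by rw [hc0comm]
          _ = (z1 * Γ) * c0 := by rw [mul_assoc]
      -- commutation of z1 * Γ with c1
      have eA : c1 * (z1 * Γ) = -(z1 * (c1 * Γ)) := by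
        have e2 : c1 * (Γ * z1) = z1 * (c1 * Γ) := by
          rw [← mul_assoc]; exact e1
        rw [hz1Γ, mul_neg] at e2
        exact neg_eq_iff_eq_neg.mp e2
      have hyc1 : c1 * (z1 * Γ) = (z1 * Γ) * c1 := by
        calc c1 * (z1 * Γ) = -(z1 * (c1 * Γ)) := eA
          _ = z1 * (-(c1 * Γ)) := by rw [mul_neg]
          _ = z1 * (Γ * c1) := by rw [hc1comm]
          _ = (z1 * Γ) * c1 := by rw [mul_assoc]
      have hcsplit : c = c0 + c1 := by
        rw [hc0def, hc1def]
        module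
      rw [hcsplit, add_mul, mul_add, hyc0, hyc1]
    refine ⟨z0, ⟨hz0A, key0 z⟩, z1 * Γ, ⟨hyA, ?_⟩, ?_⟩
    · rw [← mul_assoc, hcan, hz1Γ]
    · have hsum : z0 + z1 = z := by
        rw [hz0def, hz1def]
        module
      rw [hcan]
      exact hsum.symm
  -- easy inclusion
  have heasy : S ⊆ Set.centralizer (Set.centralizer S) := fun s hs c hc => (hc s hs).symm
  -- build L
  refine ⟨{ carrier := S
            mul_mem' := ?_
            one_mem' := ?_
            add_mem' := ?_
            zero_mem' := ⟨0, hzeroE, 0, hzeroO, by simp⟩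
            algebraMap_mem' := ?_
            star_mem' := ?_
            centralizer_centralizer' := Set.Subset.antisymm hmain heasy }, rfl, ?_, ?_, ?_⟩
  · -- multiplication
    rintro a b ⟨x, hx, y, hy, rfl⟩ ⟨x', hx', y', hy', rfl⟩
    refine ⟨x * x' - y * y', hEsub (hEE hx hx') (hOO hy hy'),
      x * y' + y * x', hOadd (hEO hx hy') (hOE hy hx'), ?_⟩
    have e1 : (y * Γ) * x' = (y * x') * Γ := by
      rw [mul_assoc, hEcomm hx', ← mul_assoc]
    have e2 : (y * Γ) * (y' * Γ) = -(y * y') := by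
      have h3 : Γ * (y' * Γ) = -y' := by
        rw [← mul_assoc, hOcomm hy', neg_mul, hcan]
      rw [mul_assoc, h3, mul_neg]
    calc (x + y * Γ) * (x' + y' * Γ)
        = x * x' + x * (y' * Γ) + ((y * Γ) * x' + (y * Γ) * (y' * Γ)) := by noncomm_ring
      _ = x * x' + x * (y' * Γ) + ((y * x') * Γ + -(y * y')) := by rw [e1, e2]
      _ = x * x' - y * y' + (x * y' + y * x') * Γ := by noncomm_ring
  · -- one
    exact ⟨1, ⟨one_mem R, by rw [mul_one, h2]⟩, 0, hzeroO, by simp⟩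
  · -- addition
    rintro a b ⟨x, hx, y, hy, rfl⟩ ⟨x', hx', y', hy', rfl⟩
    refine ⟨x + x', hEadd hx hx', y + y', hOadd hy hy', ?_⟩
    rw [add_mul]
    abel
  · -- algebraMap
    intro c
    refine ⟨algebraMap ℂ (H →L[ℂ] H) c, ⟨?_, ?_⟩, 0, hzeroO, by simp⟩
    · exact R.toStarSubalgebra.toSubalgebra.algebraMap_mem c
    · rw [Algebra.algebraMap_eq_smul_one, aux_AdSmul, mul_one, h2]
  · -- star
    rintro a ⟨x, hx, y, hy, rfl⟩
    refine ⟨star x, hEstar hx, -(star y), hOneg (hOstar hy), ?_⟩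
    rw [star_add, star_mul, hsa, hOcomm (hOstar hy), neg_mul]
  · -- graded by Γ
    exact ⟨⟨hsa, h2⟩, hSad⟩
  · -- even part
    apply Set.Subset.antisymm
    · rintro z ⟨⟨x, hx, y, hy, rfl⟩, hzeq⟩
      have hAd : Γ * (x + y * Γ) * Γ = x + (-(y * Γ)) := by
        rw [aux_AdAdd, hx.2, aux_AdMul h2 y Γ, hy.2, hAdΓ, neg_mul]
      rw [hAd] at hzeq
      have hy0 : y * Γ = 0 := by
        have h4 : -(y * Γ) = y * Γ := by
          have := congrArg (fun t => t - x) hzeq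
          simpa using this
        have h5 : (2:ℂ) • (y * Γ) = 0 := by
          rw [two_smul]
          nth_rewrite 1 [← h4]
          simp
        have := smul_eq_zero.mp h5
        rcases this with h | h
        · exact absurd h (by norm_num)
        · exact h
      have hyz : y = 0 := by
        have := congrArg (fun t => t * Γ) hy0
        simpa only [hcan, zero_mul] using this
      rw [hyz] at *
      simpa using hx
    · intro x hx
      exact ⟨hEmemS hx, hx.2⟩
  · -- odd part
    apply Set.Subset.antisymm
    · rintro z ⟨⟨x, hx, y, hy, rfl⟩, hzeq⟩
      have hAd : Γ * (x + y * Γ) * Γ = x + (-(y * Γ)) := by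
        rw [aux_AdAdd, hx.2, aux_AdMul h2 y Γ, hy.2, hAdΓ, neg_mul]
      rw [hAd] at hzeq
      have hx0 : x = 0 := by
        have h4 : (2:ℂ) • x = 0 := by
          have := congrArg (fun t => t + (y * Γ)) hzeq
          simp only [neg_add_rev] at this
          rw [two_smul]
          calc x + x = (x + -(y * Γ)) + (y * Γ) + x := by abel
            _ = -(x + y * Γ) + (y * Γ) + x := by rw [hzeq]
            _ = 0 := by abel
        rcases smul_eq_zero.mp h4 with h | h
        · exact absurd h (by norm_num)
        · exact h
      refine ⟨y, hy, ?_⟩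
      rw [hx0, zero_add]
    · rintro z ⟨y, hy, rfl⟩
      refine ⟨hOmemS hy, ?_⟩
      rw [← mul_assoc, hcan, hOcomm hy]
end
end

section
/- Let R be a von Neumann algebra on a Hilbert space H and Γ a self-adjoint unitary with ΓRΓ = R. Then V = ((1-i)/2)·I + ((1+i)/2)·Γ is a unitary operator, and for every A ∈ R one has V*AV = A^(0) + i A^(1) Γ, where A^(0) = (A + ΓAΓ)/2 and A^(1) = (A - ΓAΓ)/2. Consequently the map A ↦ V*AV is a *-isomorphism from R onto the von Neumann algebra R^(0) + R^(1)Γ. -/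
noncomputable section

variable {H : Type*} [NormedAddCommGroup H] [InnerProductSpace ℂ H] [CompleteSpace H]

set_option maxHeartbeats 2000000 in
/-- `V = ((1-i)/2)I + ((1+i)/2)Γ` is a unitary with
`V*AV = A⁰ + i A¹ Γ`, and `A ↦ V*AV` is a `*`-isomorphism of `R` onto `R⁰ + R¹Γ`. -/
theorem stmt_1 (R : VonNeumannAlgebra H) (Γ : H →L[ℂ] H) (hΓ : IsSAU Γ)
    (hinv : ∀ x ∈ R, Γ * x * Γ ∈ R) (V : H →L[ℂ] H)
    (hV : V = (((1 : ℂ) - Complex.I) / 2) • (1 : H →L[ℂ] H) +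
      (((1 : ℂ) + Complex.I) / 2) • Γ) :
    (star V * V = 1 ∧ V * star V = 1) ∧
    (∀ A ∈ R, star V * A * V =
      (2⁻¹ : ℂ) • (A + Γ * A * Γ) + Complex.I • ((2⁻¹ : ℂ) • (A - Γ * A * Γ) * Γ)) ∧
    Function.Injective (fun A : H →L[ℂ] H => star V * A * V) ∧
    (fun A : H →L[ℂ] H => star V * A * V) '' (R : Set (H →L[ℂ] H)) =
      {z | ∃ x ∈ evenPart (R : Set (H →L[ℂ] H)) Γ,
           ∃ y ∈ oddPart (R : Set (H →L[ℂ] H)) Γ, z = x + y * Γ} := by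
  obtain ⟨hs, h2⟩ := hΓ
  have hstarV : star V = (((1:ℂ)+Complex.I)/2) • (1 : H →L[ℂ] H) +
      (((1:ℂ)-Complex.I)/2) • Γ := by
    rw [hV]
    simp [star_smul, hs, map_div₀, map_sub, map_add, map_one, Complex.conj_I, map_ofNat,
      sub_neg_eq_add]
    ring_nf
  have smem : ∀ (c : ℂ) (x : H →L[ℂ] H), x ∈ R → c • x ∈ R := by
    intro c x hx
    rw [← smul_one_mul]
    exact mul_mem (R.toStarSubalgebra.smul_mem (one_mem _) c) hx
  have h4 : ∀ B : H →L[ℂ] H, Γ * (Γ * B * Γ) * Γ = B := by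
    intro B
    calc Γ * (Γ * B * Γ) * Γ = (Γ * Γ) * B * (Γ * Γ) := by noncomm_ring
    _ = B := by rw [h2, one_mul, mul_one]
  have key : ∀ A : H →L[ℂ] H, star V * A * V =
      (2⁻¹ : ℂ) • (A + Γ * A * Γ) + Complex.I • ((2⁻¹ : ℂ) • (A - Γ * A * Γ) * Γ) := by
    intro A
    rw [hstarV, hV]
    have h3 : Γ * A * Γ * Γ = Γ * A := by rw [mul_assoc (Γ*A) Γ Γ, h2, mul_one]
    simp only [mul_add, add_mul, smul_mul_assoc, mul_smul_comm, smul_smul, smul_add, smul_sub,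
      one_mul, mul_one, sub_mul, h3]
    match_scalars <;> (field_simp; ring_nf) <;> simp [Complex.ext_iff] <;> ring
  have hu1 : star V * V = 1 := by
    rw [hstarV, hV]
    simp only [mul_add, add_mul, smul_mul_assoc, mul_smul_comm, smul_smul, one_mul, mul_one, h2]
    match_scalars <;> (field_simp; ring_nf) <;> simp [Complex.ext_iff] <;> ring
  have hu2 : V * star V = 1 := by
    rw [hstarV, hV]
    simp only [mul_add, add_mul, smul_mul_assoc, mul_smul_comm, smul_smul, one_mul, mul_one, h2]
    match_scalars <;> (field_simp; ring_nf) <;> simp [Complex.ext_iff] <;> ring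
  have cancel : ∀ A : H →L[ℂ] H, V * (star V * A * V) * star V = A := by
    intro A
    calc V * (star V * A * V) * star V = (V * star V) * A * (V * star V) := by noncomm_ring
    _ = A := by rw [hu2, one_mul, mul_one]
  refine ⟨⟨hu1, hu2⟩, fun A _ => key A, ?_, ?_⟩
  · intro A B hAB
    simp only at hAB
    have := congrArg (fun X => V * X * star V) hAB
    simpa only [cancel] using this
  · ext z
    constructor
    · rintro ⟨A, hA, rfl⟩
      simp only
      rw [key A]
      refine ⟨(2⁻¹ : ℂ) • (A + Γ * A * Γ), ⟨?_, ?_⟩,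
        Complex.I • ((2⁻¹ : ℂ) • (A - Γ * A * Γ)), ⟨?_, ?_⟩, ?_⟩
      · exact smem _ _ (add_mem hA (hinv A hA))
      · simp only [mul_smul_comm, smul_mul_assoc, mul_add, add_mul, h4]
        module
      · exact smem _ _ (smem _ _ (sub_mem hA (hinv A hA)))
      · simp only [mul_smul_comm, smul_mul_assoc, mul_sub, sub_mul, h4]
        module
      · simp only [smul_mul_assoc]
    · rintro ⟨x, ⟨hxR, hxe⟩, y, ⟨hyR, hyo⟩, rfl⟩
      refine ⟨x + (-Complex.I) • y, add_mem hxR (smem _ _ hyR), ?_⟩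
      simp only
      rw [key]
      have hG : Γ * (x + (-Complex.I) • y) * Γ = x + Complex.I • y := by
        simp only [mul_add, add_mul, mul_smul_comm, smul_mul_assoc, hxe, hyo]
        module
      rw [hG]
      simp only [add_mul, sub_mul, smul_mul_assoc, smul_sub, smul_add, smul_smul]
      match_scalars
      all_goals field_simp
      all_goals ring_nf
      all_goals simp [Complex.ext_iff]
      all_goals ring
end
end

section
/- Let (R, Ad_Γ) be a graded von Neumann algebra such that Z(R) contains an odd self-adjoint unitary U (i.e., U ∈ Z(R), U = U*, U² = I, and ΓUΓ = -U). Then Z(R^(0)) ⊆ Z(R), where R^(0) is the even part of R. -/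
noncomputable section

variable {H : Type*} [NormedAddCommGroup H] [InnerProductSpace ℂ H] [CompleteSpace H]

/-- if `Z(R)` contains an odd self-adjoint unitary, then `Z(R⁰) ⊆ Z(R)`. -/
theorem stmt_4 (R : VonNeumannAlgebra H) (Γ : H →L[ℂ] H) (hΓ : IsSAU Γ)
    (hinv : ∀ x ∈ R, Γ * x * Γ ∈ R) (U : H →L[ℂ] H)
    (hU : U ∈ centerSet (R : Set (H →L[ℂ] H)) ∩ oddPart (R : Set (H →L[ℂ] H)) Γ)
    (hUsa : star U = U) (hUun : U * U = 1) :
    centerSet (evenPart (R : Set (H →L[ℂ] H)) Γ) ⊆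
      centerSet (R : Set (H →L[ℂ] H)) := by
  obtain ⟨⟨hUR, hUc⟩, hUR', hUodd⟩ := hU
  have hGG : Γ * Γ = 1 := hΓ.2
  have key : ∀ a : H →L[ℂ] H, Γ * (Γ * a * Γ) * Γ = a := by
    intro a
    calc Γ * (Γ * a * Γ) * Γ = (Γ * Γ) * a * (Γ * Γ) := by
          simp only [mul_assoc]
    _ = a := by rw [hGG, one_mul, mul_one]
  rintro x ⟨⟨hxR, hxΓ⟩, hxc⟩
  refine ⟨hxR, fun y hy => ?_⟩
  set e : H →L[ℂ] H := (2 : ℂ)⁻¹ • (y + Γ * y * Γ) with he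
  set o : H →L[ℂ] H := (2 : ℂ)⁻¹ • (y - Γ * y * Γ) with ho
  have hyeo : y = e + o := by
    rw [he, ho, ← smul_add]
    have : y + Γ * y * Γ + (y - Γ * y * Γ) = (2 : ℂ) • y := by
      rw [two_smul]; abel
    rw [this, smul_smul, inv_mul_cancel₀ (by norm_num : (2:ℂ) ≠ 0), one_smul]
  have heR : e ∈ (R : Set (H →L[ℂ] H)) := by
    exact R.toStarSubalgebra.smul_mem (add_mem hy (hinv y hy)) _
  have hoR : o ∈ (R : Set (H →L[ℂ] H)) := by
    exact R.toStarSubalgebra.smul_mem (sub_mem hy (hinv y hy)) _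
  have heEven : e ∈ evenPart (R : Set (H →L[ℂ] H)) Γ := by
    refine ⟨heR, ?_⟩
    rw [he, mul_smul_comm, smul_mul_assoc]
    congr 1
    rw [mul_add, add_mul, key]
    abel
  have hoOdd : Γ * o * Γ = -o := by
    rw [ho, mul_smul_comm, smul_mul_assoc, ← smul_neg]
    congr 1
    rw [mul_sub, sub_mul, key]
    abel
  -- U * o is even and in R
  have hUoR : U * o ∈ (R : Set (H →L[ℂ] H)) := mul_mem hUR hoR
  have hUoEven : U * o ∈ evenPart (R : Set (H →L[ℂ] H)) Γ := by
    refine ⟨hUoR, ?_⟩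
    have : Γ * (U * o) * Γ = (Γ * U * Γ) * (Γ * o * Γ) := by
      simp only [← mul_assoc]
      rw [mul_assoc (Γ * U) Γ Γ, mul_assoc (Γ * U * (Γ * Γ))]
      rw [hGG, mul_one, ← mul_assoc]
    rw [this, hUodd, hoOdd, neg_mul_neg]
  have hxe : x * e = e * x := hxc e heEven
  have hxUo : x * (U * o) = (U * o) * x := hxc _ hUoEven
  have hxU : U * x = x * U := hUc x hxR
  have hxo : x * o = o * x := by
    have h1 : U * (x * o) = U * (o * x) := by
      calc U * (x * o) = (x * U) * o := by rw [← hxU, mul_assoc]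
      _ = x * (U * o) := by rw [mul_assoc]
      _ = (U * o) * x := hxUo
      _ = U * (o * x) := by rw [mul_assoc]
    have := congrArg (fun z => U * z) h1
    simpa [← mul_assoc, hUun] using this
  rw [hyeo, mul_add, add_mul, hxe, hxo]
end
end

section
/- Let (R, Ad_Γ) be a graded von Neumann algebra such that Z(R) contains an odd self-adjoint unitary. If E ∈ R^(0) is a projection that is abelian in R^(0) (i.e., E R^(0) E is a commutative algebra), then E is abelian in R (i.e., E R E is commutative). -/
noncomputable section

variable {H : Type*} [NormedAddCommGroup H] [InnerProductSpace ℂ H] [CompleteSpace H]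

/-- if `Z(R)` contains an odd self-adjoint unitary, then every projection
abelian in `R⁰` is abelian in `R`. -/
theorem stmt_5 (R : VonNeumannAlgebra H) (Γ : H →L[ℂ] H) (hΓ : IsSAU Γ)
    (hinv : ∀ x ∈ R, Γ * x * Γ ∈ R) (U : H →L[ℂ] H)
    (hU : U ∈ centerSet (R : Set (H →L[ℂ] H)) ∩ oddPart (R : Set (H →L[ℂ] H)) Γ)
    (hUsa : star U = U) (hUun : U * U = 1)
    (E : H →L[ℂ] H) (hE : E ∈ evenPart (R : Set (H →L[ℂ] H)) Γ) (hEp : IsProjOp E)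
    (hEab : AbelianProj (evenPart (R : Set (H →L[ℂ] H)) Γ) E) :
    AbelianProj (R : Set (H →L[ℂ] H)) E := by
  obtain ⟨hΓs, hΓ2⟩ := hΓ
  obtain ⟨⟨hUR, hUc⟩, _, hUodd⟩ := hU
  have hER : E ∈ (R : Set (H →L[ℂ] H)) := hE.1
  have hUE : U * E = E * U := hUc E hER
  -- decomposition of a corner element
  have key : ∀ z ∈ (R : Set (H →L[ℂ] H)), ∃ a b,
      a ∈ evenPart (R : Set (H →L[ℂ] H)) Γ ∧ b ∈ evenPart (R : Set (H →L[ℂ] H)) Γ ∧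
      E * z * E = E * a * E + U * (E * b * E) := by
    intro z hz
    set g := Γ * z * Γ with hg
    have hgR : g ∈ (R : Set (H →L[ℂ] H)) := hinv z hz
    have h2 : Γ * (Γ * z * Γ) * Γ = z := by
      have : Γ * (Γ * z * Γ) * Γ = (Γ * Γ) * z * (Γ * Γ) := by noncomm_ring
      rw [this, hΓ2, one_mul, mul_one]
    refine ⟨(2:ℂ)⁻¹ • (z + g), U * ((2:ℂ)⁻¹ • (z - g)), ⟨?_, ?_⟩, ⟨?_, ?_⟩, ?_⟩
    · exact Subalgebra.smul_mem R.toSubalgebra (add_mem hz hgR) _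
    · rw [mul_smul_comm, smul_mul_assoc]
      congr 1
      rw [mul_add, add_mul, hg, h2, add_comm]
    · exact mul_mem hUR (Subalgebra.smul_mem R.toSubalgebra (sub_mem hz hgR) _)
    · have hwodd : Γ * ((2:ℂ)⁻¹ • (z - g)) * Γ = -((2:ℂ)⁻¹ • (z - g)) := by
        rw [mul_smul_comm, smul_mul_assoc, ← smul_neg]
        congr 1
        rw [mul_sub, sub_mul, hg, h2, neg_sub]
      have h3 : Γ * (U * ((2:ℂ)⁻¹ • (z - g))) * Γ
          = (Γ * U * Γ) * (Γ * ((2:ℂ)⁻¹ • (z - g)) * Γ) := by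
        have : (Γ * U * Γ) * (Γ * ((2:ℂ)⁻¹ • (z - g)) * Γ)
            = Γ * U * (Γ * Γ) * ((2:ℂ)⁻¹ • (z - g)) * Γ := by noncomm_ring
        rw [this, hΓ2, mul_one, mul_assoc Γ U]
      rw [h3, hUodd, hwodd, neg_mul_neg]
    · have hright : U * (E * (U * ((2:ℂ)⁻¹ • (z - g))) * E)
          = E * ((2:ℂ)⁻¹ • (z - g)) * E := by
        have h4 : U * (E * (U * ((2:ℂ)⁻¹ • (z - g))) * E)
            = (U * E) * U * ((2:ℂ)⁻¹ • (z - g)) * E := by noncomm_ring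
        rw [h4, hUE]
        have h5 : E * U * U * ((2:ℂ)⁻¹ • (z - g)) * E
            = E * (U * U) * ((2:ℂ)⁻¹ • (z - g)) * E := by noncomm_ring
        rw [h5, hUun, mul_one]
      rw [hright]
      have h6 : E * ((2:ℂ)⁻¹ • (z + g)) * E + E * ((2:ℂ)⁻¹ • (z - g)) * E
          = E * ((2:ℂ)⁻¹ • (z + g) + (2:ℂ)⁻¹ • (z - g)) * E := by noncomm_ring
      rw [h6]
      congr 2
      module
  intro x hx y hy
  obtain ⟨a, b, ha, hb, hxd⟩ := key x hx
  obtain ⟨c, d, hc, hd, hyd⟩ := key y hy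
  have hcomm : ∀ w ∈ (R : Set (H →L[ℂ] H)), U * (E * w * E) = (E * w * E) * U := fun w hw =>
    hUc _ (mul_mem (mul_mem hER hw) hER)
  have hUA := hcomm a ha.1
  have hUB := hcomm b hb.1
  have hUC := hcomm c hc.1
  have hUD := hcomm d hd.1
  have expand : ∀ (P Q S T : H →L[ℂ] H), U * P = P * U → U * Q = Q * U →
      (P + U * Q) * (S + U * T) = P * S + Q * T + U * (P * T) + U * (Q * S) := by
    intro P Q S T hP hQ
    have e1 : P * (U * T) = U * (P * T) := by rw [← mul_assoc, ← hP, mul_assoc]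
    have e2 : (U * Q) * (U * T) = Q * T := by
      calc (U * Q) * (U * T) = (U * (Q * U)) * T := by noncomm_ring
        _ = (U * (U * Q)) * T := by rw [← hQ]
        _ = ((U * U) * Q) * T := by noncomm_ring
        _ = Q * T := by rw [hUun, one_mul]
    calc (P + U * Q) * (S + U * T)
        = P * S + P * (U * T) + (U * Q) * S + (U * Q) * (U * T) := by noncomm_ring
      _ = P * S + Q * T + U * (P * T) + U * (Q * S) := by
          rw [e1, e2, mul_assoc]; abel
  rw [hxd, hyd,
    expand (E * a * E) (E * b * E) (E * c * E) (E * d * E) hUA hUB,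
    expand (E * c * E) (E * d * E) (E * a * E) (E * b * E) hUC hUD,
    hEab a ha c hc, hEab b hb d hd, hEab a ha d hd, hEab b hb c hc]
  abel
end
end

section
/- Let (R, Ad_Γ) be a graded von Neumann algebra containing an odd unitary. If R is of type III, then the even part R^(0) is of type III. -/
noncomputable section

variable {H : Type*} [NormedAddCommGroup H] [InnerProductSpace ℂ H] [CompleteSpace H]

/-
Let `e` be an even projection of `R` that is finite in `R⁰`.  If the corner `eRe` contains no
nonzero odd self-adjoint element, then a partial isometry of `R` between subprojections of `e`
has vanishing odd part, so it lies in `R⁰`: `e` is finite in `R`, hence `e = 0`.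

Otherwise let `y ∈ eRe` be odd, self-adjoint and nonzero, say `y⁺ ≠ 0`.  Conjugation by `Γ`
exchanges `y⁺` and `y⁻`, so the range projection `Q ≤ e` of `(y⁺)²` is orthogonal to `ΓQΓ`.  Since
`R` is of type III, `Q` is infinite: `k < Q` with `k ~ Q` through some `m ∈ R`.  Then the even
element `m + ΓmΓ` implements `k + ΓkΓ ~ Q + ΓQΓ`, a proper equivalence below `e` inside `R⁰`,
which contradicts the finiteness of `e` in `R⁰`.
-/

section Conjugation

variable {A : Type*} [Monoid A] {Γ : A}

theorem conj_mul_conj (hΓ : Γ * Γ = 1) (x y : A) :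
    Γ * x * Γ * (Γ * y * Γ) = Γ * (x * y) * Γ := by
  rw [show Γ * x * Γ * (Γ * y * Γ) = Γ * x * (Γ * Γ) * y * Γ by simp only [mul_assoc], hΓ,
    mul_one, mul_assoc Γ x y]

theorem conj_conj (hΓ : Γ * Γ = 1) (x : A) : Γ * (Γ * x * Γ) * Γ = x := by
  rw [show Γ * (Γ * x * Γ) * Γ = Γ * Γ * x * (Γ * Γ) by simp only [mul_assoc], hΓ, one_mul,
    mul_one]

theorem star_conj [StarMul A] (hΓ : star Γ = Γ) (x : A) :
    star (Γ * x * Γ) = Γ * star x * Γ := by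
  rw [star_mul, star_mul, hΓ, mul_assoc]

theorem IsStarProjection.conj [StarMul A] (hΓ : star Γ = Γ) (hΓ2 : Γ * Γ = 1) {p : A}
    (hp : IsStarProjection p) : IsStarProjection (Γ * p * Γ) :=
  ⟨by rw [IsIdempotentElem, conj_mul_conj hΓ2, hp.isIdempotentElem.eq],
    by rw [IsSelfAdjoint, star_conj hΓ, hp.isSelfAdjoint.star_eq]⟩

end Conjugation

section PartialIsometry

variable {A : Type*} [NonUnitalNormedRing A] [StarRing A] [CStarRing A] {v w p q p' q' : A}

theorem mul_eq_self_of_star_mul_self_eq (hv : star v * v = p) (hp : IsIdempotentElem p) :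
    v * p = v := by
  have hsa : star p = p := by rw [← hv, star_mul, star_star]
  have key : star (v * p - v) * (v * p - v) = 0 := by
    have : star (v * p - v) * (v * p - v)
        = star p * (star v * v) * p - star p * (star v * v) - (star v * v) * p + star v * v := by
      rw [star_sub, star_mul]; noncomm_ring
    rw [this, hv, hsa, hp.eq, hp.eq, sub_self, zero_sub, neg_add_cancel]
  exact sub_eq_zero.mp ((CStarRing.star_mul_self_eq_zero_iff _).mp key)

theorem mul_eq_self_of_mul_star_self_eq (hv : v * star v = q) (hq : IsIdempotentElem q) :
    q * v = v := by
  have := mul_eq_self_of_star_mul_self_eq (v := star v) (by rwa [star_star]) hq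
  have hsa : star q = q := by rw [← hv, star_mul, star_star]
  simpa [star_mul, hsa] using congr(star $this)

theorem star_mul_eq_zero_of_orthogonal_ranges (hv : v * star v = q) (hw : w * star w = q')
    (hq : IsIdempotentElem q) (hq' : IsIdempotentElem q') (hqq' : q * q' = 0) :
    star v * w = 0 := by
  have hsa : star q = q := by rw [← hv, star_mul, star_star]
  rw [← mul_eq_self_of_mul_star_self_eq hv hq, ← mul_eq_self_of_mul_star_self_eq hw hq',
    star_mul, hsa, mul_assoc, ← mul_assoc q, hqq', zero_mul, mul_zero]

theorem star_add_mul_add_of_orthogonal (hv : star v * v = p) (hv' : v * star v = q)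
    (hw : star w * w = p') (hw' : w * star w = q') (hp : IsIdempotentElem p)
    (hq : IsIdempotentElem q) (hp' : IsIdempotentElem p') (hq' : IsIdempotentElem q')
    (hpp' : p * p' = 0) (hqq' : q * q' = 0) :
    star (v + w) * (v + w) = p + p' ∧ (v + w) * star (v + w) = q + q' := by
  have hvw : star v * w = 0 := star_mul_eq_zero_of_orthogonal_ranges hv' hw' hq hq' hqq'
  have hvw' : v * star w = 0 := by
    simpa using star_mul_eq_zero_of_orthogonal_ranges (v := star v) (w := star w)
      (by rwa [star_star]) (by rwa [star_star]) hp hp' hpp'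
  have hwv : star w * v = 0 := by simpa [star_mul] using congr(star $hvw)
  have hwv' : w * star v = 0 := by simpa [star_mul] using congr(star $hvw')
  constructor
  · rw [star_add, add_mul, mul_add, mul_add, hv, hw, hvw, hwv, add_zero, zero_add]
  · rw [star_add, add_mul, mul_add, mul_add, hv', hw', hvw', hwv', add_zero, zero_add]

end PartialIsometry

theorem conj_posPart_of_conj_eq_neg {A : Type*} [CStarAlgebra A] [PartialOrder A]
    [StarOrderedRing A] {Γ y : A} (hΓ : star Γ = Γ) (hΓ2 : Γ * Γ = 1) (hy : IsSelfAdjoint y)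
    (hodd : Γ * y * Γ = -y) : Γ * y⁺ * Γ = y⁻ := by
  have hnonneg : ∀ a : A, 0 ≤ a → 0 ≤ Γ * a * Γ := fun a ha => by
    simpa [hΓ] using star_left_conjugate_nonneg ha Γ
  have hsplit : -y = Γ * y⁺ * Γ - Γ * y⁻ * Γ := by
    rw [← hodd, ← sub_mul, ← mul_sub, CFC.posPart_sub_negPart y hy]
  have hmul : Γ * y⁺ * Γ * (Γ * y⁻ * Γ) = 0 := by
    rw [conj_mul_conj hΓ2, CFC.posPart_mul_negPart, mul_zero, zero_mul]
  simpa using (CFC.posPart_negPart_unique hsplit hmul (hnonneg _ (CFC.posPart_nonneg y))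
    (hnonneg _ (CFC.negPart_nonneg y))).1.symm

open scoped ComplexStarModule

section ComplexParts

variable {A : Type*} [Ring A] [StarRing A] [Algebra ℂ A] [StarModule ℂ A]
  {S : StarSubalgebra ℂ A} {Γ a d : A}

theorem StarSubalgebra.realPart_mem (ha : a ∈ S) : (ℜ a : A) ∈ S := by
  rw [realPart_apply_coe, ← Complex.coe_smul]
  exact S.smul_mem (add_mem ha (star_mem ha)) _

theorem StarSubalgebra.imaginaryPart_mem (ha : a ∈ S) : (ℑ a : A) ∈ S := by
  rw [imaginaryPart_apply_coe, ← Complex.coe_smul]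
  exact S.smul_mem (S.smul_mem (sub_mem ha (star_mem ha)) _) _

theorem conj_realPart_of_conj_eq_neg (hΓ : star Γ = Γ) (hd : Γ * d * Γ = -d) :
    Γ * (ℜ d : A) * Γ = -(ℜ d : A) := by
  have hd' : Γ * star d * Γ = -star d := by rw [← star_conj hΓ, hd, star_neg]
  rw [realPart_apply_coe, mul_smul_comm, smul_mul_assoc, mul_add, add_mul, hd, hd', ← neg_add,
    smul_neg]

theorem conj_imaginaryPart_of_conj_eq_neg (hΓ : star Γ = Γ) (hd : Γ * d * Γ = -d) :
    Γ * (ℑ d : A) * Γ = -(ℑ d : A) := by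
  have hd' : Γ * star d * Γ = -star d := by rw [← star_conj hΓ, hd, star_neg]
  rw [imaginaryPart_apply_coe, mul_smul_comm, smul_mul_assoc, mul_smul_comm, smul_mul_assoc,
    mul_sub, sub_mul, hd, hd', neg_sub_neg, ← neg_sub, smul_neg, smul_neg]

-- `d = ℜ d + I • ℑ d` with `ℜ d` and `ℑ d` odd and self-adjoint
theorem StarSubalgebra.mul_mul_eq_zero_of_conj_eq_neg {e : A}
    (hΓ : star Γ = Γ)
    (hS : ∀ z ∈ S, IsSelfAdjoint z → Γ * z * Γ = -z → e * z * e = 0)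
    (hdS : d ∈ S) (hd : Γ * d * Γ = -d) : e * d * e = 0 := by
  have hre := hS _ (S.realPart_mem hdS) (ℜ d).2 (conj_realPart_of_conj_eq_neg hΓ hd)
  have him := hS _ (S.imaginaryPart_mem hdS) (ℑ d).2 (conj_imaginaryPart_of_conj_eq_neg hΓ hd)
  rw [← realPart_add_I_smul_imaginaryPart d, mul_add, add_mul, hre, mul_smul_comm,
    smul_mul_assoc, him, smul_zero, add_zero]

end ComplexParts

theorem isProjOp_iff_isStarProjection {e : H →L[ℂ] H} : IsProjOp e ↔ IsStarProjection e :=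
  isStarProjection_iff'.symm

theorem posPart_mem {S : VonNeumannAlgebra H} {a : H →L[ℂ] H} (ha : a ∈ S) : a⁺ ∈ S := by
  rw [← S.commutant_commutant, VonNeumannAlgebra.mem_commutant_iff]
  intro g hg
  exact (Commute.cfcₙ_real (VonNeumannAlgebra.mem_commutant_iff.mp hg a ha) _).eq.symm

def rangeProj (b : H →L[ℂ] H) : H →L[ℂ] H :=
  b.range.topologicalClosure.starProjection

theorem isStarProjection_rangeProj (b : H →L[ℂ] H) : IsStarProjection (rangeProj b) :=
  isStarProjection_starProjection

theorem rangeProj_mul_self (b : H →L[ℂ] H) : rangeProj b * b = b := by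
  ext ξ
  exact Submodule.starProjection_eq_self_iff.mpr (b.range.le_topologicalClosure ⟨ξ, rfl⟩)

theorem mul_rangeProj_of_mul_eq {b c : H →L[ℂ] H} (h : c * b = b) :
    c * rangeProj b = rangeProj b := by
  have hfix : b.range.topologicalClosure ≤ (c - 1).ker := by
    refine Submodule.topologicalClosure_minimal _ ?_ (c - 1).isClosed_ker
    rintro _ ⟨ξ, rfl⟩
    simpa [sub_eq_zero] using congr($h ξ)
  ext ξ
  simpa [rangeProj, sub_eq_zero] using hfix (Submodule.starProjection_apply_mem _ ξ)

theorem rangeProj_mul_eq_zero {b x : H →L[ℂ] H} (h : star b * x = 0) : rangeProj b * x = 0 := by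
  ext ξ
  rw [mul_apply_eq_comp, zero_apply, rangeProj,
    Submodule.starProjection_apply_eq_zero_iff,
    Submodule.orthogonal_closure, ContinuousLinearMap.orthogonal_range]
  simpa [ContinuousLinearMap.star_eq_adjoint] using congr($h ξ)

theorem rangeProj_mem {S : VonNeumannAlgebra H} {b : H →L[ℂ] H} (hb : b ∈ S) :
    rangeProj b ∈ S := by
  rw [VonNeumannAlgebra.IsStarProjection.mem_iff (isStarProjection_rangeProj b)]
  intro y hy
  rw [rangeProj, Submodule.range_starProjection]
  apply Submodule.topologicalClosure_mem_invtSubmodule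
  rw [Module.End.mem_invtSubmodule_iff_forall_mem_of_mem]
  rintro _ ⟨ξ, rfl⟩
  exact ⟨y ξ, by simpa using congr($(VonNeumannAlgebra.mem_commutant_iff.mp hy b hb) ξ)⟩

theorem rangeProj_mul_conj_eq_zero {Γ b : H →L[ℂ] H} (hΓ : IsSAU Γ) (hb : IsSelfAdjoint b)
    (hbΓ : b * (Γ * b * Γ) = 0) : rangeProj b * (Γ * rangeProj b * Γ) = 0 := by
  have hΓbsa : star (Γ * b * Γ) = Γ * b * Γ := by rw [star_conj hΓ.1, hb.star_eq]
  have hQb' : rangeProj b * (Γ * b * Γ) = 0 := rangeProj_mul_eq_zero (by rw [hb.star_eq, hbΓ])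
  have hb'Q : Γ * b * Γ * rangeProj b = 0 := by
    simpa [star_mul, hΓbsa, (isStarProjection_rangeProj b).isSelfAdjoint.star_eq] using
      congr(star $hQb')
  refine rangeProj_mul_eq_zero ?_
  calc star b * (Γ * rangeProj b * Γ) = Γ * (Γ * b * Γ) * Γ * (Γ * rangeProj b * Γ) := by
        rw [hb.star_eq, conj_conj hΓ.2]
    _ = 0 := by rw [conj_mul_conj hΓ.2, hb'Q, mul_zero, zero_mul]

theorem FiniteProj.of_subProj {M : Set (H →L[ℂ] H)} (hM : ∀ x ∈ M, ∀ y ∈ M, x - y ∈ M)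
    {e G : H →L[ℂ] H} (hfin : FiniteProj M e) (heM : e ∈ M) (he : IsStarProjection e)
    (hGM : G ∈ M) (hG : IsStarProjection G) (hGe : SubProj G e) : FiniteProj M G := by
  intro f hfM hf hfG ⟨w, hwM, hw, hw'⟩
  rw [isProjOp_iff_isStarProjection] at hf
  have hd : IsStarProjection (e - G) := hG.sub_of_mul_eq_left he hGe.1
  have hfe : f * e = f := by rw [← hfG.1, mul_assoc, hGe.1]
  have hef : e * f = f := by rw [← hfG.2, ← mul_assoc, hGe.2]
  have hfd : f * (e - G) = 0 := by rw [mul_sub, hfe, hfG.1, sub_self]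
  have hGd : G * (e - G) = 0 := by rw [mul_sub, hGe.1, hG.isIdempotentElem.eq, sub_self]
  have hd1 : star (e - G) * (e - G) = e - G := by
    rw [hd.isSelfAdjoint.star_eq, hd.isIdempotentElem.eq]
  have hd2 : (e - G) * star (e - G) = e - G := by
    rw [hd.isSelfAdjoint.star_eq, hd.isIdempotentElem.eq]
  obtain ⟨hw1, hw2⟩ := star_add_mul_add_of_orthogonal hw hw' hd1 hd2 hf.isIdempotentElem
    hG.isIdempotentElem hd.isIdempotentElem hd.isIdempotentElem hfd hGd
  -- `f + (e - G)` and `w + (e - G)` lie in `M` as `f - (G - e)` and `w - (G - e)`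
  have hsum : f + (e - G) = e := by
    refine hfin _
      (by simpa [sub_sub_eq_add_sub, add_sub_assoc] using hM f hfM _ (hM G hGM e heM))
      (isProjOp_iff_isStarProjection.mpr (hf.add hd hfd)) ⟨?_, ?_⟩
      ⟨w + (e - G), ?_, hw1, by rwa [add_sub_cancel] at hw2⟩
    · rw [add_mul, hfe, sub_mul, he.isIdempotentElem.eq, hGe.1]
    · rw [mul_add, hef, mul_sub, he.isIdempotentElem.eq, hGe.2]
    · simpa [sub_sub_eq_add_sub, add_sub_assoc] using hM w hwM _ (hM G hGM e heM)
  rwa [add_sub_left_comm, add_eq_left, sub_eq_zero] at hsum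

theorem SubProj.add {f f' Q Q' : H →L[ℂ] H} (h : SubProj f Q) (h' : SubProj f' Q')
    (hQ : IsStarProjection Q) (hQ' : IsStarProjection Q') (hQQ' : Q * Q' = 0) :
    SubProj (f + f') (Q + Q') := by
  have hQ'Q : Q' * Q = 0 := by
    simpa [star_mul, hQ.isSelfAdjoint.star_eq, hQ'.isSelfAdjoint.star_eq] using congr(star $hQQ')
  have hfQ' : f * Q' = 0 := by rw [← h.1, mul_assoc, hQQ', mul_zero]
  have hf'Q : f' * Q = 0 := by rw [← h'.1, mul_assoc, hQ'Q, mul_zero]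
  have hQf' : Q * f' = 0 := by rw [← h'.2, ← mul_assoc, hQQ', zero_mul]
  have hQ'f : Q' * f = 0 := by rw [← h.2, ← mul_assoc, hQ'Q, zero_mul]
  exact ⟨by rw [mul_add, add_mul, add_mul, h.1, hfQ', hf'Q, h'.1, add_zero, zero_add],
    by rw [add_mul, mul_add, mul_add, h.2, hQf', hQ'f, h'.2, add_zero, zero_add]⟩

section Graded

variable {R : VonNeumannAlgebra H} {Γ : H →L[ℂ] H}

theorem sub_mem_evenPart {x y : H →L[ℂ] H}
    (hx : x ∈ evenPart (R : Set (H →L[ℂ] H)) Γ) (hy : y ∈ evenPart (R : Set (H →L[ℂ] H)) Γ) :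
    x - y ∈ evenPart (R : Set (H →L[ℂ] H)) Γ :=
  ⟨sub_mem hx.1 hy.1, by rw [mul_sub, sub_mul, hx.2, hy.2]⟩

theorem add_conj_mem_evenPart {x : H →L[ℂ] H} (hΓ : IsSAU Γ)
    (hinv : ∀ x ∈ R, Γ * x * Γ ∈ R) (hx : x ∈ R) :
    x + Γ * x * Γ ∈ evenPart (R : Set (H →L[ℂ] H)) Γ :=
  ⟨add_mem hx (hinv x hx), by rw [mul_add, add_mul, conj_conj hΓ.2, add_comm]⟩

theorem SubProj.conj {f Q : H →L[ℂ] H} (hΓ : IsSAU Γ) (h : SubProj f Q) :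
    SubProj (Γ * f * Γ) (Γ * Q * Γ) :=
  ⟨by rw [conj_mul_conj hΓ.2, h.1], by rw [conj_mul_conj hΓ.2, h.2]⟩

theorem FiniteProj.of_evenPart {e : H →L[ℂ] H}
    (hΓ : IsSAU Γ) (hinv : ∀ x ∈ R, Γ * x * Γ ∈ R)
    (he : e ∈ evenPart (R : Set (H →L[ℂ] H)) Γ) (hep : IsStarProjection e)
    (hfin : FiniteProj (evenPart (R : Set (H →L[ℂ] H)) Γ) e)
    (hodd : ∀ z ∈ R, IsSelfAdjoint z → Γ * z * Γ = -z → e * z * e = 0) :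
    FiniteProj (R : Set (H →L[ℂ] H)) e := by
  intro f hf hfp hfe ⟨v, hv, hv1, hv2⟩
  have hve : e * v * e = v := by
    rw [mul_eq_self_of_mul_star_self_eq hv2 hep.isIdempotentElem,
      ← mul_eq_self_of_star_mul_self_eq hv1 hfp.1, mul_assoc, hfe.1]
  have hvodd : Γ * (v - Γ * v * Γ) * Γ = -(v - Γ * v * Γ) := by
    rw [mul_sub, sub_mul, conj_conj hΓ.2, neg_sub]
  have hcorner : e * (v - Γ * v * Γ) * e = 0 :=
    R.toStarSubalgebra.mul_mul_eq_zero_of_conj_eq_neg hΓ.1 hodd (sub_mem hv (hinv v hv)) hvodd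
  have hvΓ : Γ * v * Γ = v := by
    rw [mul_sub, sub_mul, hve, ← he.2, conj_mul_conj hΓ.2, conj_mul_conj hΓ.2, hve,
      sub_eq_zero] at hcorner
    exact hcorner.symm
  have hfΓ : Γ * f * Γ = f := by rw [← hv1, ← conj_mul_conj hΓ.2, ← star_conj hΓ.1, hvΓ]
  exact hfin f ⟨hf, hfΓ⟩ hfp hfe ⟨v, ⟨hv, hvΓ⟩, hv1, hv2⟩

theorem exists_isStarProjection_mul_conj_eq_zero_of_posPart_ne_zero
    {y e : H →L[ℂ] H} (hΓ : IsSAU Γ) (hy : y ∈ R) (hysa : IsSelfAdjoint y)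
    (hodd : Γ * y * Γ = -y) (hpos : y⁺ ≠ 0) (hey : e * y = y) :
    ∃ Q ∈ R, IsStarProjection Q ∧ Q ≠ 0 ∧ e * Q = Q ∧ Q * (Γ * Q * Γ) = 0 := by
  have hpsa : IsSelfAdjoint y⁺ := (CFC.posPart_nonneg y).isSelfAdjoint
  have hb : y * y⁺ = y⁺ * y⁺ := by
    simpa [sub_mul, CFC.negPart_mul_posPart] using
      congr($(CFC.posPart_sub_negPart y hysa) * y⁺).symm
  have hΓb : Γ * (y⁺ * y⁺) * Γ = y⁻ * y⁻ := by
    rw [← conj_mul_conj hΓ.2, conj_posPart_of_conj_eq_neg hΓ.1 hΓ.2 hysa hodd]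
  refine ⟨rangeProj (y⁺ * y⁺), rangeProj_mem (mul_mem (posPart_mem hy) (posPart_mem hy)),
    isStarProjection_rangeProj _, fun hQ => hpos ?_,
    mul_rangeProj_of_mul_eq (by rw [← hb, ← mul_assoc, hey]),
    rangeProj_mul_conj_eq_zero hΓ (by rw [IsSelfAdjoint, star_mul, hpsa.star_eq]) ?_⟩
  · have hb0 : y⁺ * y⁺ = 0 := by rw [← rangeProj_mul_self (y⁺ * y⁺), hQ, zero_mul]
    nth_rewrite 1 [← hpsa.star_eq] at hb0
    exact (CStarRing.star_mul_self_eq_zero_iff _).mp hb0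
  · rw [hΓb, mul_assoc, ← mul_assoc y⁺ y⁻, CFC.posPart_mul_negPart, zero_mul, mul_zero]

theorem exists_isStarProjection_mul_conj_eq_zero
    {y e : H →L[ℂ] H} (hΓ : IsSAU Γ) (hy : y ∈ R) (hysa : IsSelfAdjoint y)
    (hodd : Γ * y * Γ = -y) (hy0 : y ≠ 0) (hey : e * y = y) :
    ∃ Q ∈ R, IsStarProjection Q ∧ Q ≠ 0 ∧ e * Q = Q ∧ Q * (Γ * Q * Γ) = 0 := by
  by_cases hpos : y⁺ = 0
  · refine exists_isStarProjection_mul_conj_eq_zero_of_posPart_ne_zero hΓ (neg_mem hy) hysa.neg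
      (by rw [mul_neg, neg_mul, hodd]) ?_ (by rw [mul_neg, hey])
    rw [CFC.posPart_neg]
    intro hneg
    exact hy0 (by rw [← CFC.posPart_sub_negPart y hysa, hpos, hneg, sub_zero])
  · exact exists_isStarProjection_mul_conj_eq_zero_of_posPart_ne_zero hΓ hy hysa hodd hpos hey

theorem FiniteProj.of_mul_conj_eq_zero {e Q : H →L[ℂ] H}
    (hΓ : IsSAU Γ) (hinv : ∀ x ∈ R, Γ * x * Γ ∈ R)
    (he : e ∈ evenPart (R : Set (H →L[ℂ] H)) Γ) (hep : IsStarProjection e)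
    (hfin : FiniteProj (evenPart (R : Set (H →L[ℂ] H)) Γ) e)
    (hQ : Q ∈ R) (hQp : IsStarProjection Q) (heQ : e * Q = Q) (hQQ : Q * (Γ * Q * Γ) = 0) :
    FiniteProj (R : Set (H →L[ℂ] H)) Q := by
  intro f hf hfp hfQ ⟨m, hm, hm1, hm2⟩
  rw [isProjOp_iff_isStarProjection] at hfp
  have hQ' : IsStarProjection (Γ * Q * Γ) := hQp.conj hΓ.1 hΓ.2
  have hf' : IsStarProjection (Γ * f * Γ) := hfp.conj hΓ.1 hΓ.2
  have hff : f * (Γ * f * Γ) = 0 := by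
    nth_rewrite 1 [← hfQ.1]
    rw [mul_assoc, ← (hfQ.conj hΓ).2, ← mul_assoc Q, hQQ, zero_mul, mul_zero]
  have hQe : Q * e = Q := by
    simpa [star_mul, hQp.isSelfAdjoint.star_eq, hep.isSelfAdjoint.star_eq] using congr(star $heQ)
  have hGe : SubProj (Q + Γ * Q * Γ) e := by
    have hQ'e : Γ * Q * Γ * e = Γ * Q * Γ := by rw [← he.2, conj_mul_conj hΓ.2, hQe]
    have heQ' : e * (Γ * Q * Γ) = Γ * Q * Γ := by rw [← he.2, conj_mul_conj hΓ.2, heQ]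
    exact ⟨by rw [add_mul, hQe, hQ'e], by rw [mul_add, heQ, heQ']⟩
  have hGfin : FiniteProj (evenPart (R : Set (H →L[ℂ] H)) Γ) (Q + Γ * Q * Γ) :=
    hfin.of_subProj (fun _ hx _ hy => sub_mem_evenPart hx hy) he hep
      (add_conj_mem_evenPart hΓ hinv hQ) (hQp.add hQ' hQQ) hGe
  obtain ⟨hw1, hw2⟩ := star_add_mul_add_of_orthogonal (w := Γ * m * Γ) hm1 hm2
    (by rw [star_conj hΓ.1, conj_mul_conj hΓ.2, hm1])
    (by rw [star_conj hΓ.1, conj_mul_conj hΓ.2, hm2])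
    hfp.isIdempotentElem hQp.isIdempotentElem hf'.isIdempotentElem hQ'.isIdempotentElem hff hQQ
  have hgG : f + Γ * f * Γ = Q + Γ * Q * Γ :=
    hGfin _ (add_conj_mem_evenPart hΓ hinv hf)
      (isProjOp_iff_isStarProjection.mpr (hfp.add hf' hff))
      (hfQ.add (hfQ.conj hΓ) hQp hQ' hQQ) ⟨_, add_conj_mem_evenPart hΓ hinv hm, hw1, hw2⟩
  have hQf' : Q * (Γ * f * Γ) = 0 := by
    rw [← (hfQ.conj hΓ).2, ← mul_assoc, hQQ, zero_mul]
  calc f = Q * (f + Γ * f * Γ) := by rw [mul_add, hfQ.2, hQf', add_zero]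
    _ = Q := by rw [hgG, mul_add, hQp.isIdempotentElem.eq, hQQ, add_zero]

end Graded

theorem stmt_10_general (R : VonNeumannAlgebra H) (Γ : H →L[ℂ] H) (hΓ : IsSAU Γ)
    (hinv : ∀ x ∈ R, Γ * x * Γ ∈ R)
    (hIII : TypeIII (R : Set (H →L[ℂ] H))) :
    TypeIII (evenPart (R : Set (H →L[ℂ] H)) Γ) := by
  intro e he hep hfin
  rw [isProjOp_iff_isStarProjection] at hep
  by_cases hodd : ∀ z ∈ R, IsSelfAdjoint z → Γ * z * Γ = -z → e * z * e = 0
  · exact hIII e he.1 (isProjOp_iff_isStarProjection.mpr hep)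
      (hfin.of_evenPart hΓ hinv he hep hodd)
  · exfalso
    simp only [not_forall] at hodd
    obtain ⟨z, hz, hzsa, hzodd, hze⟩ := hodd
    have hezeodd : Γ * (e * z * e) * Γ = -(e * z * e) := by
      rw [← conj_mul_conj hΓ.2, ← conj_mul_conj hΓ.2, he.2, hzodd, mul_neg, neg_mul]
    obtain ⟨Q, hQ, hQp, hQ0, heQ, hQQ⟩ := exists_isStarProjection_mul_conj_eq_zero hΓ
      (mul_mem (mul_mem he.1 hz) he.1)
      (by simpa [hep.isSelfAdjoint.star_eq] using hzsa.conjugate e) hezeodd hze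
      (by rw [← mul_assoc, ← mul_assoc, hep.isIdempotentElem.eq])
    exact hQ0 (hIII Q hQ (isProjOp_iff_isStarProjection.mpr hQp)
      (FiniteProj.of_mul_conj_eq_zero hΓ hinv he hep hfin hQ hQp heQ hQQ))

/-- if `R` has an odd unitary and is of type III, then `R⁰` is of type III. -/
theorem stmt_10 (R : VonNeumannAlgebra H) (Γ : H →L[ℂ] H) (hΓ : IsSAU Γ)
    (hinv : ∀ x ∈ R, Γ * x * Γ ∈ R) (U : H →L[ℂ] H)
    (hU : U ∈ oddPart (R : Set (H →L[ℂ] H)) Γ)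
    (hUun : star U * U = 1 ∧ U * star U = 1)
    (hIII : TypeIII (R : Set (H →L[ℂ] H))) :
    TypeIII (evenPart (R : Set (H →L[ℂ] H)) Γ) :=
  stmt_10_general R Γ hΓ hinv hIII
end
end
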